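/- Let f : ℝⁿ → ℝⁿ, g : ℝⁿ → ℝ^{n×m}, and u : ℝⁿ → ℝ^m be continuous, let p > 0 and ψ₁, …, ψ_p : ℝⁿ → ℝ^{n×m} be continuous matrix-valued functions, and define D_M(x′) = co{ψ₁(x′), …, ψ_p(x′)} ⊆ ℝ^{n×m} for all x′ ∈ ℝⁿ. Let h : ℝⁿ → ℝ be continuously differentiable and let α : ℝ → ℝ be a locally Lipschitz extended class-K function. Assume that for every x′ ∈ ℝⁿ and every i ∈ {1,…,p}, ∇h(x′)ᵀ( f(x′) + (g(x′) + ψᵢ(x′)) u(x′) ) ≥ −α(h(x′)). Then for every T > 0 and every differentiable trajectory x : [0, T] → ℝⁿ satisfying ẋ(t) ∈ f(x(t)) + (g(x(t)) + D_M(x(t))) u(x(t)) for all t ∈ [0, T], the condition h(x(0)) ≥ 0 implies h(x(t)) ≥ 0 for all t ∈ [0, T]. -/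

import Mathlib

/-!
Along a solution, `ẋ` is `f + (g + M) u` for some `M` in the convex hull of the `ψᵢ`, and
`M ↦ ∇h · (f + (g + M) u)` is affine, so it attains its minimum over the hull at some vertex
`ψᵢ`; hence `d/dt h(x) ≥ -α(h(x))`. Wherever `h(x) < 0` this is `> 0` since `α` is increasing with
`α 0 = 0`, and a fencing argument then keeps `h(x)` from ever becoming negative.
-/

open scoped Matrix

open Set

/- Fencing argument: `-v` cannot reach the constant barrier `ε > 0`, because wherever `-v = ε`
it is strictly decreasing. -/
theorem nonneg_of_hasDerivAt_pos_of_neg {v v' : ℝ → ℝ} {a b : ℝ}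
    (hv : ∀ t ∈ Icc a b, HasDerivAt v (v' t) t)
    (hpos : ∀ t ∈ Icc a b, v t < 0 → 0 < v' t) (ha : 0 ≤ v a) :
    ∀ t ∈ Icc a b, 0 ≤ v t := by
  intro t ht
  refine le_of_forall_pos_le_add fun ε hε => ?_
  have hfence : -v t ≤ ε :=
    image_le_of_deriv_right_lt_deriv_boundary (f := -v) (f' := -v') (B' := fun _ => 0)
      (fun s hs => (hv s hs).continuousAt.neg.continuousWithinAt)
      (fun s hs => (hv s (Ico_subset_Icc_self hs)).neg.hasDerivWithinAt)
      (by simp only [Pi.neg_apply]; linarith) (fun _ => hasDerivAt_const _ ε)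
      (fun s hs hvs => by
        have := hpos s (Ico_subset_Icc_self hs) (by simp only [Pi.neg_apply] at hvs; linarith)
        simpa using this)
      ht
  linarith

theorem concaveOn_apply_add_mulVec {ι κ : Type*} [Fintype κ] (L : (ι → ℝ) →ₗ[ℝ] ℝ)
    (a : ι → ℝ) (B : Matrix ι κ ℝ) (w : κ → ℝ) :
    ConcaveOn ℝ univ fun M => L (a + (B + M) *ᵥ w) := by
  have hφ : (fun M => L (a + (B + M) *ᵥ w))
      = fun M => (L ∘ₗ (Matrix.mulVecBilin ℝ ℝ).flip w) M + L (a + B *ᵥ w) := by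
    funext M
    simp only [Matrix.add_mulVec, map_add, LinearMap.coe_comp, Function.comp_apply,
      LinearMap.flip_apply, Matrix.mulVecBilin_apply]
    ring
  rw [hφ]
  exact ((L ∘ₗ (Matrix.mulVecBilin ℝ ℝ).flip w).concaveOn convex_univ).add_const _

theorem le_apply_add_mulVec_of_mem_convexHull {ι κ : Type*} [Fintype κ]
    (L : (ι → ℝ) →ₗ[ℝ] ℝ) {a : ι → ℝ} {B : Matrix ι κ ℝ} {w : κ → ℝ} {c : ℝ}
    {S : Set (Matrix ι κ ℝ)} (hS : ∀ M ∈ S, c ≤ L (a + (B + M) *ᵥ w))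
    {M : Matrix ι κ ℝ} (hM : M ∈ convexHull ℝ S) :
    c ≤ L (a + (B + M) *ᵥ w) := by
  obtain ⟨M₀, hM₀, hle⟩ :=
    (concaveOn_apply_add_mulVec L a B w).exists_le_of_mem_convexHull (subset_univ S) hM
  exact (hS M₀ hM₀).trans hle

theorem stmt13_general (n m p : ℕ)
    (f : (Fin n → ℝ) → (Fin n → ℝ))
    (g : (Fin n → ℝ) → Matrix (Fin n) (Fin m) ℝ)
    (u : (Fin n → ℝ) → (Fin m → ℝ))
    (ψ : Fin p → (Fin n → ℝ) → Matrix (Fin n) (Fin m) ℝ)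
    (h : (Fin n → ℝ) → ℝ) (hh : ContDiff ℝ 1 h)
    (α : ℝ → ℝ) (hαm : StrictMono α) (hα0 : α 0 = 0)
    (hbar : ∀ (x' : Fin n → ℝ) (i : Fin p),
      -α (h x') ≤ fderiv ℝ h x' (f x' + (g x' + ψ i x') *ᵥ u x'))
    (T : ℝ) (x x' : ℝ → (Fin n → ℝ))
    (hderiv : ∀ t ∈ Set.Icc (0 : ℝ) T, HasDerivAt x (x' t) t)
    (hincl : ∀ t ∈ Set.Icc (0 : ℝ) T,
      ∃ M ∈ convexHull ℝ (Set.range fun i => ψ i (x t)),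
        x' t = f (x t) + (g (x t) + M) *ᵥ u (x t))
    (hx0 : 0 ≤ h (x 0)) :
    ∀ t ∈ Set.Icc (0 : ℝ) T, 0 ≤ h (x t) := by
  have hv (t : ℝ) (ht : t ∈ Icc 0 T) : HasDerivAt (h ∘ x) (fderiv ℝ h (x t) (x' t)) t :=
    ((hh.differentiable one_ne_zero) (x t)).hasFDerivAt.comp_hasDerivAt t (hderiv t ht)
  refine nonneg_of_hasDerivAt_pos_of_neg hv (fun t ht hneg => ?_) hx0
  obtain ⟨M, hM, hx't⟩ := hincl t ht
  have hbarM : -α (h (x t)) ≤ fderiv ℝ h (x t) (x' t) := by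
    rw [hx't]
    refine le_apply_add_mulVec_of_mem_convexHull (fderiv ℝ h (x t)).toLinearMap ?_ hM
    rintro _ ⟨i, rfl⟩
    exact hbar (x t) i
  have hα_neg : α (h (x t)) < 0 := hα0 ▸ hαm hneg
  linarith

/-- Robust CBFs for multiplicative (control-multiplying) disturbances
(Theorem 3 of the paper, specialized to differentiable solutions): if
`∇h(x')ᵀ(f(x') + (g(x') + ψᵢ(x'))u(x')) ≥ -α(h(x'))` for all `x'` and all `i`, then along
every differentiable solution of `ẋ ∈ f(x) + (g(x) + co{ψ₁(x),…,ψ_p(x)})u(x)` on `[0, T]`,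
`h(x(0)) ≥ 0` implies `h(x(t)) ≥ 0` on `[0, T]`. -/
theorem stmt13 (n m p : ℕ) (hp : 0 < p)
    (f : (Fin n → ℝ) → (Fin n → ℝ)) (hf : Continuous f)
    (g : (Fin n → ℝ) → Matrix (Fin n) (Fin m) ℝ) (hg : Continuous g)
    (u : (Fin n → ℝ) → (Fin m → ℝ)) (hu : Continuous u)
    (ψ : Fin p → (Fin n → ℝ) → Matrix (Fin n) (Fin m) ℝ) (hψ : ∀ i, Continuous (ψ i))
    (h : (Fin n → ℝ) → ℝ) (hh : ContDiff ℝ 1 h)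
    (α : ℝ → ℝ) (hαc : Continuous α) (hαm : StrictMono α) (hα0 : α 0 = 0)
    (hαl : LocallyLipschitz α)
    (hbar : ∀ (x' : Fin n → ℝ) (i : Fin p),
      -α (h x') ≤ fderiv ℝ h x' (f x' + (g x' + ψ i x') *ᵥ u x'))
    (T : ℝ) (hT : 0 < T) (x x' : ℝ → (Fin n → ℝ))
    (hderiv : ∀ t ∈ Set.Icc (0 : ℝ) T, HasDerivAt x (x' t) t)
    (hincl : ∀ t ∈ Set.Icc (0 : ℝ) T,
      ∃ M ∈ convexHull ℝ (Set.range fun i => ψ i (x t)),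
        x' t = f (x t) + (g (x t) + M) *ᵥ u (x t))
    (hx0 : 0 ≤ h (x 0)) :
    ∀ t ∈ Set.Icc (0 : ℝ) T, 0 ≤ h (x t) :=
  stmt13_general n m p f g u ψ h hh α hαm hα0 hbar T x x' hderiv hincl hx0
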